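/- For every integer k ≥ 2, the function g_k : {0,1,…,k−1} → ℝ defined by g_k(p) = [k(k−2p+1) − (k² + k − 3pk + p²)·((k−1)/k)^{k−p}] / ((k−p+1)(k−p)) is non-increasing in p, i.e., g_k(p) ≥ g_k(p+1) for all p ∈ {0,…,k−2}. -/

import Mathlib

/-- Second-order Bernoulli inequality. -/
lemma bernoulli2 (t : ℝ) (ht : 0 ≤ t) : ∀ n : ℕ,
    1 + (n : ℝ) * t + ((n : ℝ) * ((n : ℝ) - 1) / 2) * t ^ 2 ≤ (1 + t) ^ n := by
  intro n
  induction n with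
  | zero => norm_num
  | succ n ih =>
    have h1 : (0:ℝ) ≤ (1 + t) := by linarith
    have h2 := mul_le_mul_of_nonneg_right ih h1
    have h3 : (1 + t) ^ n * (1 + t) = (1 + t) ^ (n + 1) := by ring
    have h4 : (0:ℝ) ≤ (n : ℝ) * ((n : ℝ) - 1) := by
      rcases Nat.eq_zero_or_pos n with h | h
      · simp [h]
      · have h5 : (1:ℝ) ≤ (n : ℝ) := by exact_mod_cast h
        nlinarith
    push_cast
    nlinarith [h2, h3, mul_nonneg h4 (pow_nonneg ht 3)]

/-- The function `g_k` from the analysis of the `ρ`-partition mechanism. -/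
noncomputable def gFn (k p : ℕ) : ℝ :=
  ((k : ℝ) * ((k : ℝ) - 2 * p + 1) -
      ((k : ℝ) ^ 2 + k - 3 * p * k + (p : ℝ) ^ 2) * (((k : ℝ) - 1) / k) ^ (k - p)) /
    (((k : ℝ) - p + 1) * ((k : ℝ) - p))

set_option maxHeartbeats 1600000 in
/-- For every integer `k ≥ 2`, the function `g_k` is non-increasing on `{0,…,k−1}`:
`g_k(p) ≥ g_k(p+1)` for all `p ∈ {0,…,k−2}`. -/
theorem gFn_antitone (k p : ℕ) (hk : 2 ≤ k) (hp : p ≤ k - 2) :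
    gFn k (p + 1) ≤ gFn k p := by
  have hpk : p + 2 ≤ k := by omega
  set K : ℝ := (k : ℝ) with hK
  set P : ℝ := (p : ℝ) with hP
  have hK2 : (2:ℝ) ≤ K := by rw [hK]; exact_mod_cast hk
  have hPK : P + 2 ≤ K := by
    have : ((p + 2 : ℕ) : ℝ) ≤ (k : ℝ) := by exact_mod_cast hpk
    push_cast at this; linarith
  have hP0 : (0:ℝ) ≤ P := Nat.cast_nonneg p
  have hK0 : (0:ℝ) < K := by linarith
  have hK1 : (0:ℝ) < K - 1 := by linarith
  -- natural number n = k - p - 1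
  set n : ℕ := k - p - 1 with hn
  have e1 : k - (p + 1) = n := by omega
  have e2 : k - p = n + 1 := by omega
  have hnR : (n : ℝ) = K - P - 1 := by
    have : ((n : ℕ) : ℝ) = ((k : ℕ) : ℝ) - ((p : ℕ) : ℝ) - 1 := by
      have : n + p + 1 = k := by omega
      push_cast [← this]; ring
    simpa using this
  set x : ℝ := (K - 1) / K with hx
  set y : ℝ := x ^ n with hy
  have hx0 : 0 < x := div_pos hK1 hK0
  have hy0 : 0 ≤ y := (pow_pos hx0 n).le
  -- the key upper bound on y
  set t : ℝ := 1 / (K - 1) with ht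
  have ht0 : 0 ≤ t := by positivity
  have hxt : x * (1 + t) = 1 := by
    rw [hx, ht]; field_simp; ring
  have hyt : y * (1 + t) ^ n = 1 := by
    rw [hy, ← mul_pow, hxt, one_pow]
  have hbern := bernoulli2 t ht0 n
  set M : ℝ := K - P with hM
  have hM2 : (2:ℝ) ≤ M := by rw [hM]; linarith
  set Q : ℝ := 2 * (K - 1) ^ 2 + 2 * (M - 1) * (K - 1) + (M - 1) * (M - 2) with hQ
  have hQpos : 0 < Q := by nlinarith
  have hQid : Q = 2 * (K - 1) ^ 2 * (1 + (n : ℝ) * t + ((n : ℝ) * ((n : ℝ) - 1) / 2) * t ^ 2) := by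
    rw [hQ, hnR, ht, hM]
    field_simp
    ring
  have hyQ : y * Q ≤ 2 * (K - 1) ^ 2 := by
    calc y * Q = y * (2 * (K - 1) ^ 2 * (1 + (n : ℝ) * t + ((n : ℝ) * ((n : ℝ) - 1) / 2) * t ^ 2)) := by
          rw [hQid]
      _ ≤ y * (2 * (K - 1) ^ 2 * (1 + t) ^ n) := by
          apply mul_le_mul_of_nonneg_left _ hy0
          apply mul_le_mul_of_nonneg_left hbern
          positivity
      _ = 2 * (K - 1) ^ 2 * (y * (1 + t) ^ n) := by ring
      _ = 2 * (K - 1) ^ 2 := by rw [hyt]; ring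
  -- E ≤ 0
  set E : ℝ := M ^ 2 * (M + K - 1) - K * M - 2 * K ^ 2 * (K - 1) with hE
  have hMK : M ≤ K := by rw [hM]; linarith
  have hEneg : E ≤ 0 := by
    have h1 : 0 ≤ (K - M) * (M * (M + K - 1)) := by
      apply mul_nonneg (by linarith) (by nlinarith)
    have h2 : 0 ≤ (K - M) * (K * (M + 2 * K - 2)) := by
      apply mul_nonneg (by linarith) (by nlinarith)
    have : E = -((K - M) * (M * (M + K - 1)) + (K - M) * (K * (M + 2 * K - 2))) := by
      rw [hE, hM]; ring
    rw [this]; linarith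
  -- F2 ≥ 0
  have hF2 : 0 ≤ 2 * K ^ 2 * (K - M) * Q + 2 * (K - 1) ^ 2 * E := by
    have hfac : 2 * K ^ 2 * (K - M) * Q + 2 * (K - 1) ^ 2 * E
        = 2 * (M - 1) * (K - M) * ((2 * K - 1) * M - 2 * K) := by
      rw [hQ, hE]; ring
    rw [hfac]
    apply mul_nonneg
    apply mul_nonneg (by linarith) (by linarith)
    nlinarith
  -- W ≥ 0
  have hW : 0 ≤ 2 * K ^ 2 * (K - M) + y * E := by
    nlinarith [mul_nonneg (sub_nonneg.2 hyQ) (neg_nonneg.2 hEneg), hF2, hQpos]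
  -- unfold and finish
  rw [gFn, gFn, e1, e2]
  rw [div_le_div_iff₀ (by push_cast; rw [← hK, ← hP]; nlinarith) (by rw [← hK, ← hP]; nlinarith)]
  push_cast
  rw [← hK, ← hP, ← hx]
  have hxy : x ^ (n + 1) = y * x := by rw [hy, pow_succ]
  rw [hxy]
  have hxval : x = (K - 1) / K := hx
  have hMval : M = K - P := hM
  have hEval : E = M ^ 2 * (M + K - 1) - K * M - 2 * K ^ 2 * (K - 1) := hE
  -- key identity: K * (RHS - LHS of goal) = (K - P) * (2K²(K-M) + yE)
  have hgoal : ((K * (K - 2 * P + 1) - (K ^ 2 + K - 3 * P * K + P ^ 2) * (y * x)) * ((K - (P + 1) + 1) * (K - (P + 1)))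
      - (K * (K - 2 * (P + 1) + 1) - (K ^ 2 + K - 3 * (P + 1) * K + (P + 1) ^ 2) * y) * ((K - P + 1) * (K - P)))
      * K = (K - P) * (2 * K ^ 2 * (K - M) + y * E) := by
    have hxK : x * K = K - 1 := by rw [hxval]; field_simp
    rw [hEval, hMval]
    linear_combination (-(K ^ 2 + K - 3 * P * K + P ^ 2) * y * ((K - (P + 1) + 1) * (K - (P + 1)))) * hxK
  nlinarith [mul_nonneg (by linarith : (0:ℝ) ≤ K - P) hW, hgoal, hK0]
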